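/- arXiv:1810.01557 — 4 statements merged into one kernel-verified Lean document; each statement's English description precedes it below -/
import Mathlib

section
/- Let A be a compact d-regular set in ℝᵖ with d > 0, i.e., there is c ≥ 1 with c^{−1} r^d ≤ ℋ_d(A ∩ B(x,r)) ≤ c r^d for all x ∈ A and 0 < r ≤ diam(A). Then for s > d there exists C = C(A,s,d) such that for every N-point configuration ω_N = {x_1,…,x_N} ⊂ A, min_{x ∈ A} Σ_{j=1}^N |x − x_j|^{−s} ≤ C N^{s/d}. -/
open Filter MeasureTheory Metric Real
open scoped BigOperators ENNReal NNReal Topology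

open Classical in
noncomputable def rieszEnergy {E : Type*} [PseudoMetricSpace E] (s : ℝ) (ω : Finset E) : ℝ :=
  ∑ x ∈ ω, ∑ y ∈ ω, if x ≠ y then dist x y ^ (-s) else 0

noncomputable def minRieszEnergy {E : Type*} [PseudoMetricSpace E] (s : ℝ) (A : Set E) (N : ℕ) : ℝ :=
  sInf {e : ℝ | ∃ ω : Finset E, ↑ω ⊆ A ∧ ω.card = N ∧ e = rieszEnergy s ω}

/-- key exponent algebra : `(2^k δ)^(-s) * (c₁ * (2^(k+1) δ)^d) = (c₁ * 2^d * δ^(d-s)) * (2^(d-s))^k` -/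
lemma riesz_key_algebra (s d c₁ δ : ℝ) (hδ : 0 < δ) (k : ℕ) :
    ((2:ℝ)^k * δ) ^ (-s) * (c₁ * ((2:ℝ)^(k+1) * δ) ^ d)
      = (c₁ * (2:ℝ) ^ d * δ ^ (d - s)) * ((2:ℝ) ^ (d - s)) ^ k := by
  have h2 : (0:ℝ) < 2 := two_pos
  have h2k : (0:ℝ) ≤ (2:ℝ)^k := by positivity
  have h2k1 : (0:ℝ) ≤ (2:ℝ)^(k+1) := by positivity
  have e1 : ((2:ℝ)^k * δ) ^ (-s) = 2 ^ ((k:ℝ) * -s) * δ ^ (-s) := by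
    rw [Real.mul_rpow h2k hδ.le, ← Real.rpow_natCast 2 k, ← Real.rpow_mul h2.le]
  have e2 : ((2:ℝ)^(k+1) * δ) ^ d = 2 ^ (((k:ℝ)+1) * d) * δ ^ d := by
    rw [Real.mul_rpow h2k1 hδ.le, ← Real.rpow_natCast 2 (k+1), ← Real.rpow_mul h2.le]
    push_cast
    ring_nf
  have e3 : ((2:ℝ) ^ (d - s)) ^ k = 2 ^ ((d - s) * (k:ℝ)) := by
    rw [← Real.rpow_natCast ((2:ℝ) ^ (d - s)) k, ← Real.rpow_mul h2.le]
  have e5 : δ ^ (d - s) = δ ^ d * δ ^ (-s) := by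
    rw [← Real.rpow_add hδ]; ring_nf
  have e4 : (2:ℝ) ^ ((k:ℝ) * -s) * 2 ^ (((k:ℝ)+1) * d) = 2 ^ d * 2 ^ ((d - s) * (k:ℝ)) := by
    rw [← Real.rpow_add h2, ← Real.rpow_add h2]; congr 1; ring
  rw [e1, e2, e3, e5]
  linear_combination (c₁ * δ ^ (-s) * δ ^ d) * e4

set_option maxHeartbeats 2000000 in
/-- on a compact d-regular set, the minimal point energy of any N-point
configuration is at most C N^(s/d). -/
theorem statement5 {p : ℕ} (s d c : ℝ) (hd : 0 < d) (hsd : d < s) (hc : 1 ≤ c)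
    (A : Set (EuclideanSpace ℝ (Fin p))) (hA : IsCompact A) (hne : A.Nonempty)
    (hreg : ∀ x ∈ A, ∀ r : ℝ, 0 < r → r ≤ Metric.diam A →
      ENNReal.ofReal (c⁻¹ * r ^ d) ≤ μH[d] (A ∩ Metric.ball x r) ∧
        μH[d] (A ∩ Metric.ball x r) ≤ ENNReal.ofReal (c * r ^ d)) :
    ∃ C : ℝ, 0 < C ∧ ∀ ω : Finset (EuclideanSpace ℝ (Fin p)), ↑ω ⊆ A →
      ∃ x ∈ A, ∑ y ∈ ω, dist x y ^ (-s) ≤ C * (ω.card : ℝ) ^ (s / d) := by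
  classical
  obtain ⟨a0, ha0⟩ := hne
  have hs0 : 0 < s := hd.trans hsd
  have hc0 : 0 < c := lt_of_lt_of_le one_pos hc
  have hsd0 : s / d ≠ 0 := ne_of_gt (div_pos hs0 hd)
  set D := Metric.diam A with hDdef
  clear_value D
  by_cases hDpos : 0 < D
  swap
  · -- degenerate case : A is a single point
    refine ⟨1, one_pos, fun ω hω => ⟨a0, ha0, ?_⟩⟩
    have hzero : ∀ y ∈ ω, dist a0 y ^ (-s) = 0 := by
      intro y hy
      have h1 : dist a0 y ≤ D := by
        rw [hDdef]; exact Metric.dist_le_diam_of_mem hA.isBounded ha0 (hω hy)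
      have h2 : dist a0 y = 0 :=
        le_antisymm (h1.trans (le_of_not_gt hDpos)) dist_nonneg
      rw [h2, Real.zero_rpow (by intro h; exact hs0.ne' (by linarith [neg_eq_zero.mp h]))]
    rw [Finset.sum_eq_zero hzero]
    have : (0:ℝ) ≤ (ω.card : ℝ) ^ (s / d) := Real.rpow_nonneg (Nat.cast_nonneg _) _
    linarith
  -- main case
  -- finite cover to bound the total measure
  obtain ⟨t, htA, htfin, htcov⟩ := hA.finite_cover_balls (e := D / 2) (by linarith)
  set n : ℕ := htfin.toFinset.card with hndef
  clear_value n
  set μ : Measure (EuclideanSpace ℝ (Fin p)) := μH[d] with hμdef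
  clear_value μ
  have hmuA_ub : μ A ≤ ENNReal.ofReal ((n : ℝ) * (c * (D/2) ^ d)) := by
    have hcov' : A ⊆ ⋃ x ∈ htfin.toFinset, (A ∩ ball x (D/2)) := by
      intro z hz
      obtain ⟨x, hx, hxz⟩ := Set.mem_iUnion₂.mp (htcov hz)
      exact Set.mem_iUnion₂.mpr ⟨x, htfin.mem_toFinset.mpr hx, hz, hxz⟩
    calc μ A ≤ μ (⋃ x ∈ htfin.toFinset, (A ∩ ball x (D/2))) := measure_mono hcov'
      _ ≤ ∑ x ∈ htfin.toFinset, μ (A ∩ ball x (D/2)) := measure_biUnion_finset_le _ _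
      _ ≤ ∑ _x ∈ htfin.toFinset, ENNReal.ofReal (c * (D/2) ^ d) := by
          refine Finset.sum_le_sum fun x hx => ?_
          exact (hreg x (htA (htfin.mem_toFinset.mp hx)) (D/2) (by linarith) (by linarith)).2
      _ = (n : ℕ) • ENNReal.ofReal (c * (D/2) ^ d) := by rw [Finset.sum_const, hndef]
      _ = ENNReal.ofReal ((n : ℝ) * (c * (D/2) ^ d)) := by
          rw [nsmul_eq_mul, ← ENNReal.ofReal_natCast n,
            ← ENNReal.ofReal_mul (Nat.cast_nonneg n)]
  -- uniform upper regularity with constant c₁, all radii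
  set c₁ : ℝ := ((n : ℝ) + 1) * c with hc₁def
  clear_value c₁
  have hc₁pos : 0 < c₁ := by rw [hc₁def]; positivity
  have hcc₁ : c ≤ c₁ := by rw [hc₁def]; nlinarith [Nat.cast_nonneg (α := ℝ) n]
  have hball : ∀ y ∈ A, ∀ r : ℝ, 0 < r → μ (A ∩ ball y r) ≤ ENNReal.ofReal (c₁ * r ^ d) := by
    intro y hy r hr
    rcases le_or_gt r D with hrD | hrD
    · refine ((hreg y hy r hr hrD).2).trans (ENNReal.ofReal_le_ofReal ?_)
      have : (0:ℝ) ≤ r ^ d := (Real.rpow_pos_of_pos hr d).le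
      nlinarith
    · refine (measure_mono Set.inter_subset_left).trans (hmuA_ub.trans
        (ENNReal.ofReal_le_ofReal ?_))
      have h1 : (D/2) ^ d ≤ r ^ d :=
        Real.rpow_le_rpow (by linarith) (by linarith) hd.le
      have h2 : (0:ℝ) ≤ (D/2) ^ d := Real.rpow_nonneg (by linarith) _
      have h3 : (0:ℝ) ≤ r ^ d := Real.rpow_nonneg (by linarith) _
      nlinarith [Nat.cast_nonneg (α := ℝ) n]
  -- lower bound for μ A
  have hmuA_lb : ENNReal.ofReal (c⁻¹ * D ^ d) ≤ μ A :=
    ((hreg a0 ha0 D hDpos le_rfl).1).trans (measure_mono Set.inter_subset_left)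
  set m : ℝ := c⁻¹ * D ^ d / 2 with hmdef
  clear_value m
  have hDd : 0 < D ^ d := Real.rpow_pos_of_pos hDpos d
  have hm0 : 0 < m := by rw [hmdef]; positivity
  -- geometric ratio
  set q : ℝ := (2:ℝ) ^ (d - s) with hqdef
  clear_value q
  have hq0 : 0 < q := by rw [hqdef]; exact Real.rpow_pos_of_pos two_pos _
  have hq1 : q < 1 := by
    rw [hqdef]
    exact Real.rpow_lt_one_of_one_lt_of_neg one_lt_two (by linarith : d - s < 0)
  have h1q : 0 < 1 - q := by linarith
  -- the final constant
  set C : ℝ := 2 * (c₁ * (2:ℝ) ^ d * (D ^ (d - s) * (2 * c ^ 2) ^ ((s - d)/d)) * (1-q)⁻¹) / m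
    with hCdef
  clear_value C
  have h2d : (0:ℝ) < (2:ℝ) ^ d := Real.rpow_pos_of_pos two_pos _
  have hDds : (0:ℝ) < D ^ (d - s) := Real.rpow_pos_of_pos hDpos _
  have h2c2 : (0:ℝ) < (2 * c ^ 2) ^ ((s - d)/d) := Real.rpow_pos_of_pos (by positivity) _
  have hCpos : 0 < C := by
    rw [hCdef]
    have h10 : 0 < c₁ * (2:ℝ) ^ d * (D ^ (d - s) * (2 * c ^ 2) ^ ((s - d)/d)) * (1-q)⁻¹ :=
      mul_pos (mul_pos (mul_pos hc₁pos h2d) (mul_pos hDds h2c2)) (inv_pos.mpr h1q)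
    exact div_pos (by linarith) hm0
  refine ⟨C, hCpos, fun ω hω => ?_⟩
  set N : ℕ := ω.card with hNdef
  clear_value N
  rcases Nat.eq_zero_or_pos N with hN0 | hNpos
  · refine ⟨a0, ha0, ?_⟩
    have hωe : ω = ∅ := Finset.card_eq_zero.mp (hNdef.symm.trans hN0)
    have hsum : ∑ y ∈ ω, dist a0 y ^ (-s) = 0 := by rw [hωe]; simp
    rw [hsum, hN0]
    simp [Real.zero_rpow hsd0]
  have hN1 : (1:ℝ) ≤ (N:ℝ) := by exact_mod_cast hNpos
  have hNr : (0:ℝ) < N := by linarith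
  -- separation distance
  set X : ℝ := 2 * c ^ 2 * N with hXdef
  clear_value X
  have hX1 : (1:ℝ) ≤ X := by rw [hXdef]; nlinarith
  have hX0 : (0:ℝ) < X := by linarith
  set δ : ℝ := D * X ^ (-(1/d)) with hδdef
  clear_value δ
  have hXp : (0:ℝ) < X ^ (-(1/d)) := Real.rpow_pos_of_pos hX0 _
  have hδ0 : 0 < δ := by rw [hδdef]; exact mul_pos hDpos hXp
  have hδD : δ ≤ D := by
    rw [hδdef]
    have ht1 : X ^ (-(1/d)) ≤ 1 :=
      Real.rpow_le_one_of_one_le_of_nonpos hX1 (neg_nonpos.mpr (by positivity))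
    nlinarith
  have hδd : (N:ℝ) * (c * δ ^ d) = m := by
    have h1 : δ ^ d = D ^ d * X⁻¹ := by
      rw [hδdef, Real.mul_rpow hDpos.le hXp.le, ← Real.rpow_mul hX0.le,
        show -(1/d) * d = -1 by field_simp, Real.rpow_neg_one]
    rw [h1, hXdef, hmdef]
    field_simp
  -- the set of well-separated points
  set G : Set (EuclideanSpace ℝ (Fin p)) := A \ ⋃ y ∈ ω, ball y δ with hGdef
  have hGA : G ⊆ A := Set.diff_subset
  have hGm : MeasurableSet G :=
    hA.isClosed.measurableSet.diff
      (MeasurableSet.biUnion ω.countable_toSet fun _ _ => measurableSet_ball)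
  have hGdist : ∀ x ∈ G, ∀ y ∈ ω, δ ≤ dist x y := by
    intro x hx y hy
    by_contra hlt
    exact hx.2 (Set.mem_biUnion hy (mem_ball.mpr (lt_of_not_ge hlt)))
  -- G has measure at least m
  have hGmeas : ENNReal.ofReal m ≤ μ G := by
    have hsplit : A ⊆ G ∪ ⋃ y ∈ ω, (A ∩ ball y δ) := by
      intro x hx
      by_cases hxb : x ∈ ⋃ y ∈ ω, ball y δ
      · obtain ⟨y, hy, hxy⟩ := Set.mem_iUnion₂.mp hxb
        exact Or.inr (Set.mem_iUnion₂.mpr ⟨y, hy, hx, hxy⟩)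
      · exact Or.inl ⟨hx, hxb⟩
    have h1 : μ A ≤ μ G + ∑ y ∈ ω, μ (A ∩ ball y δ) :=
      (measure_mono hsplit).trans ((measure_union_le _ _).trans
        (add_le_add le_rfl (measure_biUnion_finset_le _ _)))
    have h2 : ∑ y ∈ ω, μ (A ∩ ball y δ) ≤ ENNReal.ofReal m := by
      calc ∑ y ∈ ω, μ (A ∩ ball y δ)
          ≤ ∑ _y ∈ ω, ENNReal.ofReal (c * δ ^ d) :=
            Finset.sum_le_sum fun y hy => (hreg y (hω hy) δ hδ0 hδD).2
        _ = (N : ℕ) • ENNReal.ofReal (c * δ ^ d) := by rw [Finset.sum_const, hNdef]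
        _ = ENNReal.ofReal ((N:ℝ) * (c * δ ^ d)) := by
            rw [nsmul_eq_mul, ← ENNReal.ofReal_natCast, ← ENNReal.ofReal_mul (Nat.cast_nonneg _)]
        _ = ENNReal.ofReal m := by rw [hδd]
    have h3 : ENNReal.ofReal (c⁻¹ * D ^ d) = ENNReal.ofReal m + ENNReal.ofReal m := by
      rw [← ENNReal.ofReal_add hm0.le hm0.le]
      congr 1
      rw [hmdef]; ring
    have h4 : ENNReal.ofReal m + ENNReal.ofReal m ≤ μ G + ENNReal.ofReal m := by
      rw [← h3]; exact hmuA_lb.trans (h1.trans (add_le_add le_rfl h2))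
    exact (ENNReal.add_le_add_iff_right ENNReal.ofReal_ne_top).mp h4
  -- measurability of the potentials
  have hfmeas : ∀ y : EuclideanSpace ℝ (Fin p),
      Measurable fun x : EuclideanSpace ℝ (Fin p) => ENNReal.ofReal (dist x y ^ (-s)) := by
    intro y
    exact ((Continuous.dist continuous_id continuous_const).measurable.pow
      measurable_const).ennreal_ofReal
  set B : ℝ := c₁ * (2:ℝ) ^ d * δ ^ (d - s) with hBdef
  clear_value B
  have hδds : (0:ℝ) < δ ^ (d - s) := Real.rpow_pos_of_pos hδ0 _
  have hB0 : 0 < B := by rw [hBdef]; exact mul_pos (mul_pos hc₁pos h2d) hδds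
  -- the single-point integral bound via dyadic annuli
  have hEy : ∀ y ∈ ω, ∫⁻ x in G, ENNReal.ofReal (dist x y ^ (-s)) ∂μ
      ≤ ENNReal.ofReal (B * (1 - q)⁻¹) := by
    intro y hy
    have hyA : y ∈ A := hω hy
    set S : ℕ → Set (EuclideanSpace ℝ (Fin p)) :=
      fun k => A ∩ (ball y ((2:ℝ)^(k+1) * δ) \ ball y ((2:ℝ)^k * δ)) with hSdef
    have hSm : ∀ k, MeasurableSet (S k) := fun k =>
      hA.isClosed.measurableSet.inter (measurableSet_ball.diff measurableSet_ball)
    have hGS : G ⊆ ⋃ k, S k := by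
      intro x hx
      have hd1 : δ ≤ dist x y := hGdist x hx y hy
      have hratio : 1 ≤ dist x y / δ := (one_le_div hδ0).mpr hd1
      obtain ⟨k, hk1, hk2⟩ := exists_nat_pow_near hratio one_lt_two
      refine Set.mem_iUnion.mpr ⟨k, hx.1, mem_ball.mpr ?_, fun hmem => ?_⟩
      · exact (div_lt_iff₀ hδ0).mp hk2
      · exact absurd (mem_ball.mp hmem) (not_lt.mpr ((le_div_iff₀ hδ0).mp hk1))
    have hk : ∀ k : ℕ, ∫⁻ x in S k, ENNReal.ofReal (dist x y ^ (-s)) ∂μ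
        ≤ ENNReal.ofReal (B * q ^ k) := by
      intro k
      have hrk : (0:ℝ) < (2:ℝ)^k * δ := mul_pos (by positivity) hδ0
      have hbound : ∀ x ∈ S k, ENNReal.ofReal (dist x y ^ (-s))
          ≤ ENNReal.ofReal (((2:ℝ)^k * δ) ^ (-s)) := by
        intro x hx
        refine ENNReal.ofReal_le_ofReal ?_
        have hge : (2:ℝ)^k * δ ≤ dist x y := not_lt.mp fun h => hx.2.2 (mem_ball.mpr h)
        exact Real.rpow_le_rpow_of_nonpos hrk hge (neg_nonpos.mpr hs0.le)
      calc ∫⁻ x in S k, ENNReal.ofReal (dist x y ^ (-s)) ∂μ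
          ≤ ∫⁻ _x in S k, ENNReal.ofReal (((2:ℝ)^k * δ) ^ (-s)) ∂μ :=
            setLIntegral_mono' (hSm k) hbound
        _ = ENNReal.ofReal (((2:ℝ)^k * δ) ^ (-s)) * μ (S k) := setLIntegral_const _ _
        _ ≤ ENNReal.ofReal (((2:ℝ)^k * δ) ^ (-s))
              * ENNReal.ofReal (c₁ * ((2:ℝ)^(k+1) * δ) ^ d) := by
            refine mul_le_mul_right ?_ _
            refine (measure_mono ?_).trans
              (hball y hyA _ (mul_pos (by positivity) hδ0))
            exact Set.inter_subset_inter_right _ Set.diff_subset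
        _ = ENNReal.ofReal (((2:ℝ)^k * δ) ^ (-s) * (c₁ * ((2:ℝ)^(k+1) * δ) ^ d)) :=
            (ENNReal.ofReal_mul (Real.rpow_nonneg hrk.le _)).symm
        _ = ENNReal.ofReal (B * q ^ k) := by
            rw [riesz_key_algebra s d c₁ δ hδ0 k, hBdef, hqdef]
    have hts : ∑' k : ℕ, ENNReal.ofReal (B * q ^ k) = ENNReal.ofReal (B * (1 - q)⁻¹) := by
      have h1 : ∀ k : ℕ, ENNReal.ofReal (B * q ^ k)
          = ENNReal.ofReal B * (ENNReal.ofReal q) ^ k := by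
        intro k; rw [ENNReal.ofReal_mul hB0.le, ENNReal.ofReal_pow hq0.le]
      rw [tsum_congr h1, ENNReal.tsum_mul_left, ENNReal.tsum_geometric,
        ENNReal.ofReal_mul hB0.le, ENNReal.ofReal_inv_of_pos h1q,
        ENNReal.ofReal_sub 1 hq0.le, ENNReal.ofReal_one]
    calc ∫⁻ x in G, ENNReal.ofReal (dist x y ^ (-s)) ∂μ
        ≤ ∫⁻ x in ⋃ k, S k, ENNReal.ofReal (dist x y ^ (-s)) ∂μ := lintegral_mono_set hGS
      _ ≤ ∑' k : ℕ, ∫⁻ x in S k, ENNReal.ofReal (dist x y ^ (-s)) ∂μ := lintegral_iUnion_le _ _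
      _ ≤ ∑' k : ℕ, ENNReal.ofReal (B * q ^ k) := ENNReal.tsum_le_tsum hk
      _ = ENNReal.ofReal (B * (1 - q)⁻¹) := hts
  set Etot : ℝ := (N:ℝ) * (B * (1 - q)⁻¹) with hEtotdef
  clear_value Etot
  have hEtot0 : 0 < Etot := by
    have h' : (0:ℝ) < (1 - q)⁻¹ := inv_pos.mpr h1q
    rw [hEtotdef]
    exact mul_pos hNr (mul_pos hB0 h')
  -- total integral bound
  have htot : ∫⁻ x in G, (∑ y ∈ ω, ENNReal.ofReal (dist x y ^ (-s))) ∂μ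
      ≤ ENNReal.ofReal Etot := by
    calc ∫⁻ x in G, (∑ y ∈ ω, ENNReal.ofReal (dist x y ^ (-s))) ∂μ
        = ∑ y ∈ ω, ∫⁻ x in G, ENNReal.ofReal (dist x y ^ (-s)) ∂μ :=
          lintegral_finset_sum ω fun y _ => hfmeas y
      _ ≤ ∑ _y ∈ ω, ENNReal.ofReal (B * (1 - q)⁻¹) := Finset.sum_le_sum hEy
      _ = (N : ℕ) • ENNReal.ofReal (B * (1 - q)⁻¹) := by rw [Finset.sum_const, hNdef]
      _ = ENNReal.ofReal Etot := by
          rw [nsmul_eq_mul, ← ENNReal.ofReal_natCast, ← ENNReal.ofReal_mul (Nat.cast_nonneg _),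
            hEtotdef]
  -- Markov / pigeonhole
  have hexists : ∃ x ∈ G, ∑ y ∈ ω, dist x y ^ (-s) ≤ 2 * Etot / m := by
    by_contra hcon
    push_neg at hcon
    have hlow : ∀ x ∈ G, ENNReal.ofReal (2 * Etot / m)
        ≤ ∑ y ∈ ω, ENNReal.ofReal (dist x y ^ (-s)) := by
      intro x hx
      rw [← ENNReal.ofReal_sum_of_nonneg fun y _ => Real.rpow_nonneg dist_nonneg _]
      exact ENNReal.ofReal_le_ofReal (hcon x hx).le
    have h5 : ENNReal.ofReal (2 * Etot / m) * μ G ≤ ENNReal.ofReal Etot := by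
      calc ENNReal.ofReal (2 * Etot / m) * μ G
          = ∫⁻ _x in G, ENNReal.ofReal (2 * Etot / m) ∂μ := (setLIntegral_const _ _).symm
        _ ≤ ∫⁻ x in G, (∑ y ∈ ω, ENNReal.ofReal (dist x y ^ (-s))) ∂μ :=
            setLIntegral_mono' hGm hlow
        _ ≤ ENNReal.ofReal Etot := htot
    have h6 : ENNReal.ofReal (2 * Etot / m) * ENNReal.ofReal m ≤ ENNReal.ofReal Etot :=
      le_trans (mul_le_mul_right hGmeas _) h5
    rw [← ENNReal.ofReal_mul (div_nonneg (by linarith) hm0.le)] at h6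
    have h7 : 2 * Etot / m * m ≤ Etot := (ENNReal.ofReal_le_ofReal_iff hEtot0.le).mp h6
    rw [div_mul_cancel₀ _ (ne_of_gt hm0)] at h7
    linarith
  obtain ⟨x, hxG, hxle⟩ := hexists
  refine ⟨x, hGA hxG, hxle.trans ?_⟩
  -- final computation : 2 * Etot / m = C * N ^ (s/d)
  have h8 : δ ^ (d - s) = D ^ (d - s) * ((2 * c ^ 2) ^ ((s - d)/d) * (N:ℝ) ^ ((s - d)/d)) := by
    rw [hδdef, Real.mul_rpow hDpos.le hXp.le, ← Real.rpow_mul hX0.le,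
      show -(1/d) * (d - s) = (s - d)/d by field_simp; ring,
      hXdef, Real.mul_rpow (by positivity) (Nat.cast_nonneg N)]
  have h9 : (N:ℝ) * (N:ℝ) ^ ((s - d)/d) = (N:ℝ) ^ (s/d) := by
    nth_rewrite 1 [← Real.rpow_one (N:ℝ)]
    rw [← Real.rpow_add hNr]
    congr 1
    field_simp
    ring
  rw [hEtotdef, hBdef, hCdef, h8, ← h9]
  apply le_of_eq
  ring
end

section
/- Let A ⊂ ℝᵖ be a compact self-similar fractal fixed under M ≥ 2 similitudes ψ_1,…,ψ_M, all with the same contraction ratio r, with images ψ_m(A) pairwise metrically separated with separation σ > 0, and let d = log M / log(1/r) (so r^{−s} = M^{s/d}). Then for s > d and any N-point configuration ω_N ⊂ A, ℰ_s(A, MN) ≤ M^{1+s/d} E_s(ω_N) + σ^{−s} M² N². -/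
open Filter MeasureTheory Metric Real
open scoped BigOperators ENNReal NNReal Topology

/-!
Place a scaled copy `ψ_m(ω_N)` of the configuration in each of the `M` pieces of `A`. The energy
of the union splits into blocks: each of the `M` diagonal blocks is `r^{-s} E_s(ω_N)`, since the
similitudes scale all distances by `r`, and each of the at most `M²` off-diagonal blocks has
`N²` terms, each at most `σ^{-s}` by separation. Finally `r^{-s} = M^{s/d}` by the choice of `d`.
-/

open Finset

theorem Real.rpow_div_log_div_log {a b : ℝ} (s : ℝ) (ha : 0 < a) (hla : Real.log a ≠ 0)
    (hb : 0 < b) : a ^ (s / (Real.log a / Real.log b)) = b ^ s := by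
  rw [Real.rpow_def_of_pos ha, Real.rpow_def_of_pos hb, div_div_eq_mul_div,
    mul_div_cancel₀ _ hla, mul_comm]

theorem injective_of_dist_eq_mul {E F : Type*} [MetricSpace E] [PseudoMetricSpace F]
    {f : E → F} {r : ℝ} (hr : 0 < r) (hf : ∀ x y, dist (f x) (f y) = r * dist x y) :
    Function.Injective f := fun x y hxy =>
  dist_eq_zero.mp <| (mul_eq_zero.mp ((hf x y).symm.trans (by rw [hxy, dist_self]))).resolve_left
    hr.ne'

theorem Finset.disjoint_of_le_dist {E : Type*} [PseudoMetricSpace E] {ω η : Finset E} {σ : ℝ}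
    (hσ : 0 < σ) (h : ∀ x ∈ ω, ∀ y ∈ η, σ ≤ dist x y) : Disjoint ω η :=
  Finset.disjoint_left.mpr fun x hx hxη => by
    have := h x hx x hxη
    rw [dist_self] at this
    linarith

theorem Finset.le_dist_of_mem_image {α E : Type*} [PseudoMetricSpace E] [DecidableEq E]
    {f g : α → E} {ω : Finset α} {σ : ℝ} (h : ∀ x ∈ ω, ∀ y ∈ ω, σ ≤ dist (f x) (g y)) :
    ∀ x ∈ ω.image f, ∀ y ∈ ω.image g, σ ≤ dist x y := by
  simpa only [mem_image, forall_exists_index, and_imp, forall_apply_eq_imp_iff₂] using h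

section RieszEnergy

variable {E : Type*} [PseudoMetricSpace E] {s : ℝ}

open Classical in
noncomputable def rieszInteraction (s : ℝ) (ω η : Finset E) : ℝ :=
  ∑ x ∈ ω, ∑ y ∈ η, if x ≠ y then dist x y ^ (-s) else 0

theorem rieszEnergy_eq_rieszInteraction (ω : Finset E) :
    rieszEnergy s ω = rieszInteraction s ω ω := rfl

theorem rieszEnergy_nonneg (ω : Finset E) : 0 ≤ rieszEnergy s ω :=
  sum_nonneg fun _ _ => sum_nonneg fun _ _ => by
    split_ifs
    exacts [Real.rpow_nonneg dist_nonneg _, le_rfl]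

theorem minRieszEnergy_le_rieszEnergy {A : Set E} {ω : Finset E} (hω : ↑ω ⊆ A) :
    minRieszEnergy s A ω.card ≤ rieszEnergy s ω :=
  csInf_le ⟨0, by rintro e ⟨η, -, -, rfl⟩; exact rieszEnergy_nonneg η⟩ ⟨ω, hω, rfl, rfl⟩

theorem rieszInteraction_le_of_le_dist {ω η : Finset E} {σ : ℝ} (hσ : 0 < σ) (hs : 0 ≤ s)
    (h : ∀ x ∈ ω, ∀ y ∈ η, σ ≤ dist x y) :
    rieszInteraction s ω η ≤ σ ^ (-s) * (#ω * #η) := by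
  classical
  have hterm : ∀ x ∈ ω, ∀ y ∈ η,
      (if x ≠ y then dist x y ^ (-s) else 0) ≤ σ ^ (-s) := fun x hx y hy => by
    split_ifs
    · exact Real.rpow_le_rpow_of_nonpos hσ (h x hx y hy) (neg_nonpos.mpr hs)
    · positivity
  calc rieszInteraction s ω η ≤ ∑ _x ∈ ω, ∑ _y ∈ η, σ ^ (-s) :=
        sum_le_sum fun x hx => sum_le_sum (hterm x hx)
    _ = σ ^ (-s) * (#ω * #η) := by simp only [sum_const, nsmul_eq_mul]; ring

theorem rieszEnergy_biUnion [DecidableEq E] {ι : Type*} {t : Finset ι} {ω : ι → Finset E}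
    (hdisj : (t : Set ι).PairwiseDisjoint ω) :
    rieszEnergy s (t.biUnion ω) = ∑ i ∈ t, ∑ j ∈ t, rieszInteraction s (ω i) (ω j) := by
  simp only [rieszEnergy, rieszInteraction, sum_biUnion hdisj]
  exact sum_congr rfl fun i _ => sum_comm

theorem rieszEnergy_biUnion_le [DecidableEq E] {ι : Type*} [DecidableEq ι] {t : Finset ι}
    {ω : ι → Finset E} (hdisj : (t : Set ι).PairwiseDisjoint ω) {C : ℝ} (hC₀ : 0 ≤ C)
    (hC : ∀ i ∈ t, ∀ j ∈ t, i ≠ j → rieszInteraction s (ω i) (ω j) ≤ C) :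
    rieszEnergy s (t.biUnion ω) ≤ ∑ i ∈ t, rieszEnergy s (ω i) + #t ^ 2 * C := by
  have hblock : ∀ i ∈ t, ∀ j ∈ t,
      rieszInteraction s (ω i) (ω j) ≤ (if i = j then rieszEnergy s (ω i) else 0) + C := by
    intro i hi j hj
    by_cases hij : i = j
    · subst hij
      rw [if_pos rfl, ← rieszEnergy_eq_rieszInteraction]
      linarith
    · simpa [hij] using hC i hi j hj hij
  calc rieszEnergy s (t.biUnion ω)
      ≤ ∑ i ∈ t, ∑ j ∈ t, ((if i = j then rieszEnergy s (ω i) else 0) + C) := by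
        rw [rieszEnergy_biUnion hdisj]
        exact sum_le_sum fun i hi => sum_le_sum fun j hj => hblock i hi j hj
    _ = ∑ i ∈ t, rieszEnergy s (ω i) + #t ^ 2 * C := by
        simp only [sum_add_distrib, sum_ite_eq, sum_ite_mem, inter_self, sum_const, nsmul_eq_mul]
        ring

end RieszEnergy

theorem rieszEnergy_image_of_dist_eq_mul {E F : Type*} [MetricSpace E] [PseudoMetricSpace F]
    [DecidableEq F] {f : E → F} {r : ℝ} (hr : 0 < r) (hf : ∀ x y, dist (f x) (f y) = r * dist x y)
    (s : ℝ) (ω : Finset E) : rieszEnergy s (ω.image f) = r ^ (-s) * rieszEnergy s ω := by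
  have hinj := injective_of_dist_eq_mul hr hf
  simp only [rieszEnergy, sum_image fun x _ y _ h => hinj h, mul_sum, hf,
    Real.mul_rpow hr.le dist_nonneg, mul_ite, mul_zero]
  congr! 4 with x _ y _
  exact hinj.eq_iff

section SimilarCopies

variable {E : Type*} [MetricSpace E] [DecidableEq E] {ι : Type*} [Fintype ι]
  {ψ : ι → E → E} {r σ : ℝ} {ω : Finset E}

theorem pairwiseDisjoint_image_of_le_dist (hσ : 0 < σ)
    (hsep : ∀ i j, i ≠ j → ∀ x ∈ ω, ∀ y ∈ ω, σ ≤ dist (ψ i x) (ψ j y)) :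
    ((univ : Finset ι) : Set ι).PairwiseDisjoint (ω.image <| ψ ·) :=
  fun i _ j _ hij => disjoint_of_le_dist hσ (le_dist_of_mem_image (hsep i j hij))

theorem card_biUnion_image_of_le_dist (hr : 0 < r)
    (hψ : ∀ i x y, dist (ψ i x) (ψ i y) = r * dist x y) (hσ : 0 < σ)
    (hsep : ∀ i j, i ≠ j → ∀ x ∈ ω, ∀ y ∈ ω, σ ≤ dist (ψ i x) (ψ j y)) :
    #(univ.biUnion (ω.image <| ψ ·)) = Fintype.card ι * #ω := by
  simp [card_biUnion (pairwiseDisjoint_image_of_le_dist hσ hsep),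
    card_image_of_injective _ (injective_of_dist_eq_mul hr (hψ _))]

theorem rieszEnergy_biUnion_image_le [DecidableEq ι] {s : ℝ} (hs : 0 ≤ s) (hr : 0 < r)
    (hψ : ∀ i x y, dist (ψ i x) (ψ i y) = r * dist x y) (hσ : 0 < σ)
    (hsep : ∀ i j, i ≠ j → ∀ x ∈ ω, ∀ y ∈ ω, σ ≤ dist (ψ i x) (ψ j y)) :
    rieszEnergy s (univ.biUnion (ω.image <| ψ ·)) ≤
      Fintype.card ι * r ^ (-s) * rieszEnergy s ω + Fintype.card ι ^ 2 * σ ^ (-s) * #ω ^ 2 := by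
  have hinj (i : ι) := injective_of_dist_eq_mul hr (hψ i)
  calc rieszEnergy s (univ.biUnion (ω.image <| ψ ·))
      ≤ ∑ i, rieszEnergy s (ω.image (ψ i)) + #(univ : Finset ι) ^ 2 * (σ ^ (-s) * (#ω * #ω)) :=
        rieszEnergy_biUnion_le (pairwiseDisjoint_image_of_le_dist hσ hsep) (by positivity)
          fun i _ j _ hij =>
            (rieszInteraction_le_of_le_dist hσ hs (le_dist_of_mem_image (hsep i j hij))).trans_eq
              (by simp only [card_image_of_injective _ (hinj _)])
    _ = Fintype.card ι * r ^ (-s) * rieszEnergy s ω + Fintype.card ι ^ 2 * σ ^ (-s) * #ω ^ 2 := by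
        simp only [rieszEnergy_image_of_dist_eq_mul hr (hψ _), sum_const, card_univ, nsmul_eq_mul]
        ring

end SimilarCopies

theorem statement7_general {p : ℕ} (s d r σ : ℝ) (M : ℕ) (hM : 2 ≤ M) (hr : 0 < r) (hr1 : r < 1)
    (hσ : 0 < σ) (A : Set (EuclideanSpace ℝ (Fin p)))
    (ψ : Fin M → EuclideanSpace ℝ (Fin p) → EuclideanSpace ℝ (Fin p))
    (hψ : ∀ m x y, dist (ψ m x) (ψ m y) = r * dist x y)
    (hfix : A = ⋃ m, ψ m '' A)
    (hsep : ∀ i j, i ≠ j → ∀ x ∈ ψ i '' A, ∀ y ∈ ψ j '' A, σ ≤ dist x y)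
    (hd : d = Real.log M / Real.log (1 / r)) (hsd : d < s)
    (N : ℕ) (ω : Finset (EuclideanSpace ℝ (Fin p))) (hω : ↑ω ⊆ A) (hcard : ω.card = N) :
    minRieszEnergy s A (M * N) ≤
      (M : ℝ) ^ (1 + s / d) * rieszEnergy s ω + σ ^ (-s) * (M : ℝ) ^ 2 * (N : ℝ) ^ 2 := by
  classical
  have hM1 : (1 : ℝ) < M := by exact_mod_cast hM
  have hs : 0 ≤ s := by
    refine le_of_lt (lt_trans ?_ hsd)
    rw [hd]
    exact div_pos (Real.log_pos hM1) (Real.log_pos (one_lt_one_div hr hr1))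
  have hsepω : ∀ i j, i ≠ j → ∀ x ∈ ω, ∀ y ∈ ω, σ ≤ dist (ψ i x) (ψ j y) :=
    fun i j hij x hx y hy => hsep i j hij _ ⟨x, hω hx, rfl⟩ _ ⟨y, hω hy, rfl⟩
  have hΩA : ↑(univ.biUnion (ω.image <| ψ ·)) ⊆ A := by
    rw [hfix]
    simp only [coe_biUnion, coe_image]
    exact Set.iUnion₂_subset fun m _ => (Set.image_mono hω).trans (Set.subset_iUnion (ψ · '' A) m)
  have hMs : (M : ℝ) ^ (1 + s / d) = M * r ^ (-s) := by
    rw [Real.rpow_add (by positivity), Real.rpow_one, hd,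
      Real.rpow_div_log_div_log s (by positivity) (Real.log_pos hM1).ne' (by positivity),
      one_div, Real.inv_rpow hr.le, ← Real.rpow_neg hr.le]
  calc minRieszEnergy s A (M * N)
      ≤ rieszEnergy s (univ.biUnion (ω.image <| ψ ·)) := by
        simpa [card_biUnion_image_of_le_dist hr hψ hσ hsepω, hcard] using
          minRieszEnergy_le_rieszEnergy (s := s) hΩA
    _ ≤ M * r ^ (-s) * rieszEnergy s ω + M ^ 2 * σ ^ (-s) * N ^ 2 := by
        simpa [hcard] using rieszEnergy_biUnion_image_le hs hr hψ hσ hsepω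
    _ = (M : ℝ) ^ (1 + s / d) * rieszEnergy s ω + σ ^ (-s) * (M : ℝ) ^ 2 * (N : ℝ) ^ 2 := by
        rw [hMs]
        ring

/-- one-step subdivision upper bound for the minimal energy. -/
theorem statement7 {p : ℕ} (s d r σ : ℝ) (M : ℕ) (hM : 2 ≤ M) (hr : 0 < r) (hr1 : r < 1)
    (hσ : 0 < σ) (A : Set (EuclideanSpace ℝ (Fin p))) (hA : IsCompact A)
    (ψ : Fin M → EuclideanSpace ℝ (Fin p) → EuclideanSpace ℝ (Fin p))
    (hψ : ∀ m x y, dist (ψ m x) (ψ m y) = r * dist x y)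
    (hfix : A = ⋃ m, ψ m '' A)
    (hsep : ∀ i j, i ≠ j → ∀ x ∈ ψ i '' A, ∀ y ∈ ψ j '' A, σ ≤ dist x y)
    (hd : d = Real.log M / Real.log (1 / r)) (hsd : d < s)
    (N : ℕ) (ω : Finset (EuclideanSpace ℝ (Fin p))) (hω : ↑ω ⊆ A) (hcard : ω.card = N) :
    minRieszEnergy s A (M * N) ≤
      (M : ℝ) ^ (1 + s / d) * rieszEnergy s ω + σ ^ (-s) * (M : ℝ) ^ 2 * (N : ℝ) ^ 2 :=
  statement7_general s d r σ M hM hr hr1 hσ A ψ hψ hfix hsep hd hsd N ω hω hcard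
end

section
/- Let A ⊂ ℝᵖ be compact, s > d > 0, and suppose there is C > 0 with ℰ_s(A, N+1) ≤ ℰ_s(A, N) + C N^{s/d} for all N. Let 𝔐(k) be a strictly increasing sequence of integers along which ℰ_s(A, 𝔐(k))/𝔐(k)^{1+s/d} converges to a limit L, and let 𝔑(k) be a sequence of nonnegative integers with 𝔑(k) = o(𝔐(k)). Then ℰ_s(A, 𝔐(k)+𝔑(k))/(𝔐(k)+𝔑(k))^{1+s/d} → L as k → ∞. -/
open Filter MeasureTheory Metric Real
open scoped BigOperators ENNReal NNReal Topology

/-!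
Monotonicity gives `ℰ(M + N) ≥ ℰ(M)`, and summing the increment bound gives
`ℰ(M + N) ≤ ℰ(M) + C N (M + N)^(s/d)`. After normalizing by `(M + N)^(1 + s/d)`, both bounds are
`ℰ(M) / M^(1 + s/d) · (M / (M + N))^(1 + s/d)` up to an error of at most `C · N / (M + N)`, and
`M / (M + N) → 1` because `N = o(M)`.
-/

theorem le_add_mul_rpow_of_forall_succ_le {f : ℕ → ℝ} {h C : ℝ} (hh : 0 ≤ h) (hC : 0 ≤ C)
    (hinc : ∀ n : ℕ, f (n + 1) ≤ f n + C * (n : ℝ) ^ h) (M N : ℕ) :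
    f (M + N) ≤ f M + C * N * ((M + N : ℕ) : ℝ) ^ h := by
  induction N with
  | zero => simp
  | succ N ih =>
    have hpow : ((M + N : ℕ) : ℝ) ^ h ≤ ((M + (N + 1) : ℕ) : ℝ) ^ h := by gcongr; omega
    calc f (M + (N + 1)) ≤ f (M + N) + C * ((M + N : ℕ) : ℝ) ^ h := hinc (M + N)
      _ ≤ f M + C * N * ((M + (N + 1) : ℕ) : ℝ) ^ h + C * ((M + (N + 1) : ℕ) : ℝ) ^ h := by
        gcongr
        exact ih.trans (by gcongr)
      _ = f M + C * ↑(N + 1) * ((M + (N + 1) : ℕ) : ℝ) ^ h := by push_cast; ring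

theorem div_rpow_mul_div_rpow {a b : ℝ} (ha : 0 < a) (hb : 0 ≤ b) (x e : ℝ) :
    x / a ^ e * (a / b) ^ e = x / b ^ e := by
  have : a ^ e ≠ 0 := (rpow_pos_of_pos ha e).ne'
  rw [div_rpow ha.le hb]
  field_simp

theorem tendsto_div_add_nhds_one {ι : Type*} {l : Filter ι} {a b : ι → ℝ}
    (ha : ∀ᶠ i in l, a i ≠ 0) (hba : Tendsto (fun i => b i / a i) l (𝓝 0)) :
    Tendsto (fun i => a i / (a i + b i)) l (𝓝 1) := by
  have h : Tendsto (fun i => (1 + b i / a i)⁻¹) l (𝓝 1) := by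
    simpa using (tendsto_const_nhds.add hba).inv₀ (by norm_num : (1 + 0 : ℝ) ≠ 0)
  refine h.congr' (ha.mono fun i hi => ?_)
  rw [one_add_div hi, inv_div]

section

variable {f : ℕ → ℝ} {M : ℕ}

theorem div_rpow_mul_div_add_rpow_le_of_monotone (hf : Monotone f) (hM : 0 < M) (N : ℕ)
    (e : ℝ) :
    f M / (M : ℝ) ^ e * ((M : ℝ) / ((M + N : ℕ) : ℝ)) ^ e ≤
      f (M + N) / ((M + N : ℕ) : ℝ) ^ e := by
  rw [div_rpow_mul_div_rpow (by exact_mod_cast hM) (Nat.cast_nonneg _)]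
  gcongr
  exact hf (Nat.le_add_right M N)

theorem div_add_rpow_le_of_forall_succ_le {h C : ℝ} (hh : 0 ≤ h) (hC : 0 ≤ C)
    (hinc : ∀ n : ℕ, f (n + 1) ≤ f n + C * (n : ℝ) ^ h) (hM : 0 < M) (N : ℕ) :
    f (M + N) / ((M + N : ℕ) : ℝ) ^ (1 + h) ≤
      f M / (M : ℝ) ^ (1 + h) * ((M : ℝ) / ((M + N : ℕ) : ℝ)) ^ (1 + h) +
        C * (1 - (M : ℝ) / ((M + N : ℕ) : ℝ)) := by
  have hP : (0 : ℝ) < ((M + N : ℕ) : ℝ) := by exact_mod_cast Nat.add_pos_left hM N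
  have hPh := rpow_pos_of_pos hP h
  rw [div_rpow_mul_div_rpow (by exact_mod_cast hM) hP.le, rpow_add hP, rpow_one,
    div_le_iff₀ (mul_pos hP hPh)]
  calc f (M + N) ≤ f M + C * N * ((M + N : ℕ) : ℝ) ^ h :=
        le_add_mul_rpow_of_forall_succ_le hh hC hinc M N
    _ = _ := by field_simp; push_cast; ring

end

theorem statement10_general {p : ℕ} (s d C : ℝ) (hd : 0 < d) (hsd : d < s) (hC : 0 < C)
    (A : Set (EuclideanSpace ℝ (Fin p)))
    (hmono : Monotone (minRieszEnergy s A))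
    (hinc : ∀ N : ℕ, minRieszEnergy s A (N + 1) ≤ minRieszEnergy s A N + C * (N : ℝ) ^ (s / d))
    (𝔐 : ℕ → ℕ) (h𝔐 : StrictMono 𝔐) (L : ℝ)
    (hL : Tendsto (fun k : ℕ => minRieszEnergy s A (𝔐 k) / ((𝔐 k : ℝ) ^ (1 + s / d)))
      atTop (nhds L))
    (𝔑 : ℕ → ℕ) (hsmall : Tendsto (fun k : ℕ => (𝔑 k : ℝ) / (𝔐 k : ℝ)) atTop (nhds 0)) :
    Tendsto (fun k : ℕ => minRieszEnergy s A (𝔐 k + 𝔑 k) /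
      (((𝔐 k + 𝔑 k : ℕ) : ℝ) ^ (1 + s / d))) atTop (nhds L) := by
  have hh : 0 ≤ s / d := (div_pos (hd.trans hsd) hd).le
  have hM : ∀ᶠ k in atTop, 0 < 𝔐 k := h𝔐.tendsto_atTop.eventually_gt_atTop 0
  have hq : Tendsto (fun k => (𝔐 k : ℝ) / ((𝔐 k + 𝔑 k : ℕ) : ℝ)) atTop (𝓝 1) := by
    simpa only [Nat.cast_add] using
      tendsto_div_add_nhds_one (hM.mono fun k hk => by positivity) hsmall
  have hlow := hL.mul (hq.rpow_const (p := 1 + s / d) (Or.inl one_ne_zero))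
  have hup := hlow.add <|
    (tendsto_const_nhds (x := C)).mul ((tendsto_const_nhds (x := (1 : ℝ))).sub hq)
  rw [one_rpow, mul_one] at hlow hup
  rw [sub_self, mul_zero, add_zero] at hup
  refine tendsto_of_tendsto_of_tendsto_of_le_of_le' hlow hup ?_ ?_
  · filter_upwards [hM] with k hk
      using div_rpow_mul_div_add_rpow_le_of_monotone hmono hk _ _
  · filter_upwards [hM] with k hk using div_add_rpow_le_of_forall_succ_le hh hC.le hinc hk _

/-- stability of the limit of normalized minimal energies under o(𝔐)
perturbations of the sequence of cardinalities. -/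
theorem statement10 {p : ℕ} (s d C : ℝ) (hd : 0 < d) (hsd : d < s) (hC : 0 < C)
    (A : Set (EuclideanSpace ℝ (Fin p))) (hA : IsCompact A)
    (hmono : Monotone (minRieszEnergy s A))
    (hinc : ∀ N : ℕ, minRieszEnergy s A (N + 1) ≤ minRieszEnergy s A N + C * (N : ℝ) ^ (s / d))
    (𝔐 : ℕ → ℕ) (h𝔐 : StrictMono 𝔐) (L : ℝ)
    (hL : Tendsto (fun k : ℕ => minRieszEnergy s A (𝔐 k) / ((𝔐 k : ℝ) ^ (1 + s / d)))
      atTop (nhds L))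
    (𝔑 : ℕ → ℕ) (hsmall : Tendsto (fun k : ℕ => (𝔑 k : ℝ) / (𝔐 k : ℝ)) atTop (nhds 0)) :
    Tendsto (fun k : ℕ => minRieszEnergy s A (𝔐 k + 𝔑 k) /
      (((𝔐 k + 𝔑 k : ℕ) : ℝ) ^ (1 + s / d))) atTop (nhds L) :=
  statement10_general s d C hd hsd hC A hmono hinc 𝔐 h𝔐 L hL 𝔑 hsmall
end

section
/- Let A ⊂ ℝᵖ be a compact self-similar fractal with M ≥ 2 similitudes of equal contraction ratio r, d = log M / log(1/r), s > d, diam(A) = 1. Then for every k ≥ 0, ℰ_s(A, M^{k+1} + M^k) ≥ M^{s/d} (M^k)^{1+s/d}. -/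
open Filter MeasureTheory Metric Real
open scoped BigOperators ENNReal NNReal Topology

/-!
Cover `A` by the `M^(k+1)` cells `ψ_{m₁} ∘ ⋯ ∘ ψ_{m_{k+1}} '' A`, each of diameter at most
`r^(k+1)`. By pigeonhole, any `M^(k+1) + M^k` points of `A` contain at least `M^k` ordered pairs
of distinct points in a common cell, and each such pair contributes at least
`(r^(k+1))^(-s) = (M^(s/d))^(k+1)` to the energy. The infimum is over a nonempty family: an injective contraction mapping `A` into
itself would, if `A` were finite, map it onto itself and so shrink its positive diameter.
-/

theorem Finset.card_le_card_add_card_filter_offDiag {α ι : Type*} [DecidableEq α] [Fintype ι]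
    [DecidableEq ι] (ω : Finset α) (c : α → ι) :
    ω.card ≤ Fintype.card ι + (ω.offDiag.filter fun q => c q.1 = c q.2).card := by
  set fiber : ι → Finset α := fun i => ω.filter (c · = i)
  have hpairs : (ω.offDiag.filter fun q => c q.1 = c q.2).card = ∑ i, (fiber i).offDiag.card := by
    rw [Finset.card_eq_sum_card_fiberwise (f := fun q => c q.1) (t := Finset.univ)
      (fun _ _ => Finset.mem_univ _)]
    refine Finset.sum_congr rfl fun i _ => congrArg Finset.card ?_
    ext q
    simp only [Finset.mem_filter, Finset.mem_offDiag, fiber]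
    constructor
    · rintro ⟨⟨⟨h1, h2, hne⟩, hc⟩, rfl⟩
      exact ⟨⟨h1, rfl⟩, ⟨h2, hc.symm⟩, hne⟩
    · rintro ⟨⟨h1, rfl⟩, ⟨h2, hc⟩, hne⟩
      exact ⟨⟨⟨h1, h2, hne⟩, hc.symm⟩, rfl⟩
  have hpoints : ω.card = ∑ i, (fiber i).card :=
    Finset.card_eq_sum_card_fiberwise fun _ _ => Finset.mem_univ _
  have hfiber (n : ℕ) : n ≤ 1 + (n * n - n) := by
    rcases n with _ | n
    · simp
    · nlinarith [Nat.sub_add_cancel (Nat.le_mul_self (n + 1))]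
  calc ω.card = ∑ i, (fiber i).card := hpoints
    _ ≤ ∑ i, (1 + (fiber i).offDiag.card) := by
      gcongr with i; rw [Finset.offDiag_card]; exact hfiber _
    _ = Fintype.card ι + (ω.offDiag.filter fun q => c q.1 = c q.2).card := by
      rw [Finset.sum_add_distrib, hpairs, Finset.sum_const, smul_eq_mul, mul_one,
        Finset.card_univ]

theorem rieszEnergy_eq_sum_offDiag {E : Type*} [PseudoMetricSpace E] (s : ℝ) (ω : Finset E) :
    rieszEnergy s ω = ∑ q ∈ ω.offDiag, dist q.1 q.2 ^ (-s) := by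
  classical
  rw [rieszEnergy, ← Finset.sum_product' (f := fun x y => if x ≠ y then dist x y ^ (-s) else 0),
    ← Finset.sum_filter]
  congr 1
  ext q
  simp [and_assoc]

theorem card_mul_rpow_neg_le_rieszEnergy {E : Type*} [MetricSpace E] {s δ : ℝ} (hs : 0 ≤ s)
    {ω : Finset E} {P : Finset (E × E)} (hP : P ⊆ ω.offDiag) (hδ : ∀ q ∈ P, dist q.1 q.2 ≤ δ) :
    P.card * δ ^ (-s) ≤ rieszEnergy s ω := by
  rw [rieszEnergy_eq_sum_offDiag, ← nsmul_eq_mul, ← Finset.sum_const]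
  calc ∑ _q ∈ P, δ ^ (-s) ≤ ∑ q ∈ P, dist q.1 q.2 ^ (-s) := by
        refine Finset.sum_le_sum fun q hq => ?_
        have hpos : 0 < dist q.1 q.2 := dist_pos.2 (Finset.mem_offDiag.1 (hP hq)).2.2
        exact Real.rpow_le_rpow_of_nonpos hpos (hδ q hq) (neg_nonpos.2 hs)
    _ ≤ ∑ q ∈ ω.offDiag, dist q.1 q.2 ^ (-s) :=
        Finset.sum_le_sum_of_subset_of_nonneg hP fun q _ _ => Real.rpow_nonneg dist_nonneg _

/-- Pigeonhole: `ω` has at least `#ω - #ι` ordered pairs of distinct points in a common `S i`. -/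
theorem card_sub_card_mul_rpow_neg_le_rieszEnergy {E ι : Type*} [MetricSpace E] [Fintype ι]
    [Nonempty ι] {s δ : ℝ} (hs : 0 ≤ s) (hδ : 0 ≤ δ) {S : ι → Set E}
    (hS : ∀ i, ∀ x ∈ S i, ∀ y ∈ S i, dist x y ≤ δ) {ω : Finset E} (hω : ↑ω ⊆ ⋃ i, S i) :
    ((ω.card : ℝ) - Fintype.card ι) * δ ^ (-s) ≤ rieszEnergy s ω := by
  classical
  have hcover : ∀ x ∈ ω, ∃ i, x ∈ S i := fun x hx => Set.mem_iUnion.1 (hω hx)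
  choose! c hc using hcover
  set P := ω.offDiag.filter fun q => c q.1 = c q.2
  have hcard : (ω.card : ℝ) - Fintype.card ι ≤ P.card := by
    have := Finset.card_le_card_add_card_filter_offDiag ω c
    rw [sub_le_iff_le_add']
    exact_mod_cast this
  have hdist : ∀ q ∈ P, dist q.1 q.2 ≤ δ := by
    intro q hq
    obtain ⟨⟨h1, h2, -⟩, hcq⟩ := Finset.mem_filter.1 hq |>.imp_left Finset.mem_offDiag.1
    exact hS (c q.1) _ (hc _ h1) _ (hcq ▸ hc _ h2)
  calc ((ω.card : ℝ) - Fintype.card ι) * δ ^ (-s) ≤ P.card * δ ^ (-s) :=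
        mul_le_mul_of_nonneg_right hcard (Real.rpow_nonneg hδ _)
    _ ≤ rieszEnergy s ω := card_mul_rpow_neg_le_rieszEnergy hs (Finset.filter_subset _ _) hdist

theorem le_minRieszEnergy {E : Type*} [PseudoMetricSpace E] {s b : ℝ} {A : Set E} (N : ℕ)
    (hA : A.Infinite) (hb : ∀ ω : Finset E, ↑ω ⊆ A → ω.card = N → b ≤ rieszEnergy s ω) :
    b ≤ minRieszEnergy s A N := by
  obtain ⟨ω, hωA, hωN⟩ := hA.exists_subset_card_eq N
  refine le_csInf ⟨_, ω, hωA, hωN, rfl⟩ ?_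
  rintro _ ⟨ω', hω'A, hω'N, rfl⟩
  exact hb ω' hω'A hω'N

section SelfSimilar

variable {E ι : Type*} (ψ : ι → E → E) (A : Set E)

/-- The cell `A_{w 0 ⋯ w (n-1)} = ψ (w 0) ∘ ⋯ ∘ ψ (w (n-1)) '' A`. -/
def cell : (n : ℕ) → (Fin n → ι) → Set E
  | 0, _ => A
  | n + 1, w => ψ (w 0) '' cell n (Fin.tail w)

variable {ψ A}

theorem subset_iUnion_cell (hA : A ⊆ ⋃ m, ψ m '' A) (n : ℕ) : A ⊆ ⋃ w, cell ψ A n w := by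
  induction n with
  | zero => exact fun x hx => Set.mem_iUnion.2 ⟨Fin.elim0, hx⟩
  | succ n ih =>
    intro x hx
    obtain ⟨m, a, ha, rfl⟩ : ∃ m, ∃ a ∈ A, ψ m a = x := by simpa using hA hx
    obtain ⟨w, hw⟩ := Set.mem_iUnion.1 (ih ha)
    refine Set.mem_iUnion.2 ⟨Fin.cons m w, ?_⟩
    simpa [cell] using Set.mem_image_of_mem (ψ m) hw

theorem dist_le_of_mem_cell [PseudoMetricSpace E] {K : ℝ≥0} (hψ : ∀ m, LipschitzWith K (ψ m))
    (hA : Bornology.IsBounded A) {n : ℕ} {w : Fin n → ι} {x y : E} (hx : x ∈ cell ψ A n w) (hy : y ∈ cell ψ A n w) :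
    dist x y ≤ K ^ n * diam A := by
  induction n generalizing x y with
  | zero => simpa using dist_le_diam_of_mem hA hx hy
  | succ n ih =>
    obtain ⟨a, ha, rfl⟩ := hx
    obtain ⟨b, hb, rfl⟩ := hy
    calc dist (ψ (w 0) a) (ψ (w 0) b) ≤ K * dist a b := (hψ (w 0)).dist_le_mul a b
      _ ≤ K * (K ^ n * diam A) := by gcongr; exact ih ha hb
      _ = K ^ (n + 1) * diam A := by ring

end SelfSimilar

theorem Set.infinite_of_mapsTo_of_lipschitzWith {E : Type*} [PseudoMetricSpace E] {f : E → E}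
    {K : ℝ≥0} (hf : LipschitzWith K f) (hK : K < 1) {A : Set E} (hA : Bornology.IsBounded A)
    (hdiam : 0 < diam A) (hmaps : Set.MapsTo f A A) (hinj : Set.InjOn f A) : A.Infinite := by
  intro hfin
  have himage : f '' A = A :=
    Set.eq_of_subset_of_ncard_le hmaps.image_subset hinj.ncard_image.ge hfin
  have : diam A ≤ K * diam A := by simpa only [himage] using hf.diam_image_le A hA
  nlinarith [show (K : ℝ) < 1 from hK]

theorem Real.rpow_neg_eq_rpow_div {r M d : ℝ} (hr : 0 < r) (hM : 0 < M)
    (hd : d = Real.log M / Real.log (1 / r)) (hd0 : d ≠ 0) (s : ℝ) : r ^ (-s) = M ^ (s / d) := by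
  rw [one_div, Real.log_inv] at hd
  have hlogr : Real.log r ≠ 0 := fun h => hd0 (by simp [hd, h])
  have hlogM : Real.log M = -d * Real.log r := by rw [hd]; field_simp
  rw [Real.rpow_def_of_pos hr, Real.rpow_def_of_pos hM, hlogM]
  congr 1
  field_simp

/-- pigeonhole lower bound for the minimal energy of M^(k+1)+M^k points. -/
theorem statement12 {p : ℕ} (s d r : ℝ) (M : ℕ) (hM : 2 ≤ M) (hr : 0 < r) (hr1 : r < 1)
    (A : Set (EuclideanSpace ℝ (Fin p))) (hA : IsCompact A)
    (ψ : Fin M → EuclideanSpace ℝ (Fin p) → EuclideanSpace ℝ (Fin p))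
    (hψ : ∀ m x y, dist (ψ m x) (ψ m y) = r * dist x y)
    (hfix : A = ⋃ m, ψ m '' A)
    (hdiam : Metric.diam A = 1)
    (hd : d = Real.log M / Real.log (1 / r)) (hsd : d < s) (k : ℕ) :
    (M : ℝ) ^ (s / d) * ((M : ℝ) ^ k) ^ (1 + s / d) ≤
      minRieszEnergy s A (M ^ (k + 1) + M ^ k) := by
  have hMpos : (0 : ℝ) < M := by positivity
  have hd0 : 0 < d :=
    hd ▸ div_pos (Real.log_pos (by exact_mod_cast hM)) (Real.log_pos (one_lt_one_div hr hr1))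
  let K : ℝ≥0 := ⟨r, hr.le⟩
  have hLip (m : Fin M) : LipschitzWith K (ψ m) :=
    LipschitzWith.of_dist_le_mul fun x y => (hψ m x y).le
  let m : Fin M := ⟨0, by omega⟩
  have hinf : A.Infinite := by
    refine Set.infinite_of_mapsTo_of_lipschitzWith (hLip m) hr1 hA.isBounded (by simp [hdiam])
      (fun x hx => ?_) (fun x _ y _ h => by simpa [h, hr.ne'] using hψ m x y)
    rw [hfix]
    exact Set.mem_iUnion.2 ⟨m, Set.mem_image_of_mem _ hx⟩
  have : Nonempty (Fin M) := ⟨m⟩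
  refine le_minRieszEnergy _ hinf fun ω hωA hωN => ?_
  have hcells := card_sub_card_mul_rpow_neg_le_rieszEnergy (S := cell ψ A (k + 1))
    (hd0.trans hsd).le (pow_nonneg hr.le (k + 1))
    (fun w x hx y hy =>
      (dist_le_of_mem_cell hLip hA.isBounded hx hy).trans_eq (by rw [hdiam, mul_one]; rfl))
    (hωA.trans (subset_iUnion_cell hfix.le (k + 1)))
  rw [hωN, Fintype.card_fun, Fintype.card_fin, Fintype.card_fin] at hcells
  calc (M : ℝ) ^ (s / d) * ((M : ℝ) ^ k) ^ (1 + s / d)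
      = (M : ℝ) ^ k * (r ^ (-s)) ^ (k + 1) := by
        rw [Real.rpow_neg_eq_rpow_div hr hMpos hd hd0.ne', Real.rpow_add (by positivity),
          Real.rpow_one, ← Real.rpow_pow_comm hMpos.le]
        ring
    _ = (((M ^ (k + 1) + M ^ k : ℕ) : ℝ) - (M ^ (k + 1) : ℕ)) * (r ^ (k + 1)) ^ (-s) := by
        rw [← Real.rpow_pow_comm hr.le]
        push_cast
        ring
    _ ≤ rieszEnergy s ω := hcells
end
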